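/- arXiv:2302.01961 — 6 statements merged into one kernel-verified Lean document; each statement's English description precedes it below -/
import Mathlib

section
/- Let E and F be real normed vector spaces, let φ : E → F be Lipschitz continuous with constant L > 0, and let g : F → ℝ be a convex function. Let x ∈ E satisfy g(φ(x)) > 0, and suppose v : F → ℝ is a nonzero continuous linear functional that is a subgradient of g at φ(x), i.e., g(y) ≥ g(φ(x)) + v(y − φ(x)) for all y ∈ F. Then for every δ ∈ E with ‖δ‖ < g(φ(x)) / (L · ‖v‖), it holds that g(φ(x + δ)) > 0 (here ‖v‖ is the operator norm of v, which equals the dual norm of the subgradient). -/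
/-- **Certified robustness of feature-convex classifiers** (Theorem 1 of the paper).
If `φ` is `L`-Lipschitz, `g` is convex, `g (φ x) > 0`, and `v` is a nonzero continuous
linear functional which is a subgradient of `g` at `φ x`, then any perturbation `δ`
with `‖δ‖ < g (φ x) / (L * ‖v‖)` keeps the classification positive. -/
theorem feature_convex_certified_radius
    {E F : Type*} [NormedAddCommGroup E] [NormedSpace ℝ E]
    [NormedAddCommGroup F] [NormedSpace ℝ F]
    (φ : E → F) (L : NNReal) (hL : 0 < L) (hφ : LipschitzWith L φ)
    (g : F → ℝ) (hg : ConvexOn ℝ Set.univ g)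
    (x : E) (hx : 0 < g (φ x))
    (v : F →L[ℝ] ℝ) (hv : v ≠ 0)
    (hsub : ∀ y : F, g (φ x) + v (y - φ x) ≤ g y)
    (δ : E) (hδ : ‖δ‖ < g (φ x) / ((L : ℝ) * ‖v‖)) :
    0 < g (φ (x + δ)) := by
  have hvn : (0:ℝ) < ‖v‖ := norm_pos_iff.mpr hv
  have hLv : (0:ℝ) < (L : ℝ) * ‖v‖ := mul_pos (by exact_mod_cast hL) hvn
  have h1 : ‖φ (x + δ) - φ x‖ ≤ (L : ℝ) * ‖δ‖ := by
    have := hφ.dist_le_mul (x + δ) x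
    simpa [dist_eq_norm, add_sub_cancel_left] using this
  have h2 : |v (φ (x + δ) - φ x)| ≤ ‖v‖ * ((L : ℝ) * ‖δ‖) := by
    calc |v (φ (x + δ) - φ x)| ≤ ‖v‖ * ‖φ (x + δ) - φ x‖ := v.le_opNorm _
    _ ≤ ‖v‖ * ((L : ℝ) * ‖δ‖) := by nlinarith
  have h3 := hsub (φ (x + δ))
  have h4 : ‖δ‖ * ((L : ℝ) * ‖v‖) < g (φ x) := by
    have := (lt_div_iff₀ hLv).mp hδ
    linarith
  have h5 := abs_le.mp h2
  nlinarith
end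

section
/- Let φ : EuclideanSpace ℝ (Fin d) → EuclideanSpace ℝ (Fin q) be Lipschitz continuous with constant L > 0 (with respect to the Euclidean norms), and let g : EuclideanSpace ℝ (Fin q) → ℝ be convex. Let x satisfy g(φ(x)) > 0 and let v ∈ EuclideanSpace ℝ (Fin q) be a nonzero vector with g(y) ≥ g(φ(x)) + ⟪v, y − φ(x)⟫ for all y. Then for every δ with ‖δ‖₂ < g(φ(x)) / (L · ‖v‖₂), it holds that g(φ(x + δ)) > 0. -/
/-!
The subgradient inequality at `φ x`, together with Cauchy–Schwarz, bounds how fast `g` can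
decrease away from `φ x`: by at most `‖v‖` per unit of distance. Since `φ` moves points by at
most `L` times the input perturbation, `g ∘ φ` drops by less than `L ‖v‖ ‖δ‖ < g (φ x)`.
-/

open scoped RealInnerProductSpace

theorem mul_lt_of_lt_div_of_nonneg {α : Type*} [Field α] [LinearOrder α] [IsStrictOrderedRing α]
    {a b c : α} (ha : 0 ≤ a) (hb : 0 ≤ b) (h : a < c / b) : a * b < c := by
  rcases hb.eq_or_lt with rfl | hb
  · rw [div_zero] at h
    exact absurd ha h.not_ge
  · exact (lt_div_iff₀ hb).mp h

section Subgradient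

variable {F : Type*} [NormedAddCommGroup F] [InnerProductSpace ℝ F]
  {g : F → ℝ} {a v : F}

theorem sub_norm_mul_norm_le_of_subgradient (hsub : ∀ y, g a + ⟪v, y - a⟫ ≤ g y) (y : F) :
    g a - ‖v‖ * ‖y - a‖ ≤ g y := by
  have hcs : -(‖v‖ * ‖y - a‖) ≤ ⟪v, y - a⟫ := neg_le_of_abs_le (abs_real_inner_le_norm v (y - a))
  linarith [hsub y]

theorem sub_mul_dist_le_comp_of_subgradient_of_lipschitzWith {E : Type*} [PseudoMetricSpace E]
    {φ : E → F} {K : NNReal} (hφ : LipschitzWith K φ) {x : E}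
    (hsub : ∀ y, g (φ x) + ⟪v, y - φ x⟫ ≤ g y) (y : E) :
    g (φ x) - K * ‖v‖ * dist y x ≤ g (φ y) := calc
  g (φ x) - K * ‖v‖ * dist y x = g (φ x) - ‖v‖ * (K * dist y x) := by ring
  _ ≤ g (φ x) - ‖v‖ * ‖φ y - φ x‖ := by
    gcongr
    rw [← dist_eq_norm]
    exact hφ.dist_le_mul y x
  _ ≤ g (φ y) := sub_norm_mul_norm_le_of_subgradient hsub (φ y)

end Subgradient

theorem feature_convex_certified_radius_l2_general {d q : ℕ}
    (φ : EuclideanSpace ℝ (Fin d) → EuclideanSpace ℝ (Fin q))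
    (L : NNReal) (hφ : LipschitzWith L φ)
    (g : EuclideanSpace ℝ (Fin q) → ℝ)
    (x : EuclideanSpace ℝ (Fin d))
    (v : EuclideanSpace ℝ (Fin q))
    (hsub : ∀ y : EuclideanSpace ℝ (Fin q), g (φ x) + (inner ℝ v (y - φ x) : ℝ) ≤ g y)
    (δ : EuclideanSpace ℝ (Fin d)) (hδ : ‖δ‖ < g (φ x) / ((L : ℝ) * ‖v‖)) :
    0 < g (φ (x + δ)) := by
  have hdrop : ‖δ‖ * (L * ‖v‖) < g (φ x) :=
    mul_lt_of_lt_div_of_nonneg (norm_nonneg δ) (by positivity) hδ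
  have hlower := sub_mul_dist_le_comp_of_subgradient_of_lipschitzWith hφ hsub (x + δ)
  rw [dist_self_add_left] at hlower
  linarith

/-- **ℓ₂-specialization of the certified robustness radius** (Theorem 1 of the paper).
The subgradient is represented as a vector `v` via the Euclidean inner product, and the
dual of the ℓ₂-norm is the ℓ₂-norm itself. -/
theorem feature_convex_certified_radius_l2 {d q : ℕ}
    (φ : EuclideanSpace ℝ (Fin d) → EuclideanSpace ℝ (Fin q))
    (L : NNReal) (hL : 0 < L) (hφ : LipschitzWith L φ)
    (g : EuclideanSpace ℝ (Fin q) → ℝ) (hg : ConvexOn ℝ Set.univ g)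
    (x : EuclideanSpace ℝ (Fin d)) (hx : 0 < g (φ x))
    (v : EuclideanSpace ℝ (Fin q)) (hv : v ≠ 0)
    (hsub : ∀ y : EuclideanSpace ℝ (Fin q), g (φ x) + (inner ℝ v (y - φ x) : ℝ) ≤ g y)
    (δ : EuclideanSpace ℝ (Fin d)) (hδ : ‖δ‖ < g (φ x) / ((L : ℝ) * ‖v‖)) :
    0 < g (φ (x + δ)) :=
  feature_convex_certified_radius_l2_general φ L hφ g x v hsub δ hδ
end

section
/- Let g : ℝ^d → ℝ be a convex function, let X ⊆ ℝ^d be a compact convex set, and let ε > 0. Then there exists a nonempty finite family of affine functions (x ↦ ⟨aᵢ, x⟩ + bᵢ), i ∈ I, such that the max-affine function h(x) = max_{i ∈ I} (⟨aᵢ, x⟩ + bᵢ) satisfies h(x) < g(x) for all x ∈ X and sup_{x ∈ X} (g(x) − h(x)) < ε. -/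
/-!
Each point `y` carries an affine minorant of `g` (Hahn–Banach on the closed convex epigraph)
that comes within `δ / 3` of `g y`. By continuity each stays within `2δ / 3` of `g` on a
neighbourhood of `y`; finitely many such neighbourhoods cover `X`, and the maximum of the
corresponding minorants, lowered by `δ / 3`, is strictly below `g` and within `δ` of it on `X`.
-/

/-- A *max-affine* function on ℝ^d: `h x = max_{i ∈ I} (⟪aᵢ, x⟫ + bᵢ)` for a nonempty finite
index set; such functions are exactly those realized by input-convex ReLU neural networks. -/
def MaxAffine {d : ℕ} (h : EuclideanSpace ℝ (Fin d) → ℝ) : Prop :=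
  ∃ (n : ℕ) (a : Fin (n + 1) → EuclideanSpace ℝ (Fin d)) (b : Fin (n + 1) → ℝ),
    ∀ x, h x = Finset.univ.sup' Finset.univ_nonempty
      (fun i : Fin (n + 1) => (inner ℝ (a i) x : ℝ) + b i)

open Set InnerProductSpace

theorem ConvexOn.exists_inner_add_le_of_lt {F : Type*} [NormedAddCommGroup F]
    [InnerProductSpace ℝ F] [CompleteSpace F] {g : F → ℝ} (hg : ConvexOn ℝ univ g)
    (hgc : LowerSemicontinuous g) {y : F} {a : ℝ} (ha : a < g y) :
    ∃ (v : F) (c : ℝ), (∀ x, inner ℝ v x + c ≤ g x) ∧ inner ℝ v y + c = a := by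
  obtain ⟨l, c, hle, heq⟩ := hg.exists_affine_le_of_lt (𝕜 := ℝ) (mem_univ y) ha isClosed_univ
    (lowerSemicontinuousOn_univ_iff.2 hgc)
  refine ⟨(toDual ℝ F).symm l, c, fun x => ?_, ?_⟩
  · simpa using hle ⟨x, mem_univ x⟩
  · simpa using heq

theorem maxAffine_finset_sup' {d : ℕ} {ι : Type*} (s : Finset ι) (hs : s.Nonempty)
    (a : ι → EuclideanSpace ℝ (Fin d)) (b : ι → ℝ) :
    MaxAffine fun x => s.sup' hs fun i => inner ℝ (a i) x + b i := by
  obtain ⟨n, hn⟩ : ∃ n, s.card = n + 1 := Nat.exists_eq_add_one.2 hs.card_pos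
  let e : Fin (n + 1) ≃ s := (s.equivFin.trans (finCongr hn)).symm
  refine ⟨n, fun k => a (e k), fun k => b (e k), fun x => le_antisymm ?_ ?_⟩
  · exact Finset.sup'_le _ _ fun i hi =>
      Finset.le_sup'_of_le _ (Finset.mem_univ (e.symm ⟨i, hi⟩)) (by simp)
  · exact Finset.sup'_le _ _ fun k _ => Finset.le_sup'_of_le _ (e k).2 le_rfl

theorem ConvexOn.exists_maxAffine_lt_and_sub_lt {d : ℕ} {g : EuclideanSpace ℝ (Fin d) → ℝ}
    (hg : ConvexOn ℝ univ g) {X : Set (EuclideanSpace ℝ (Fin d))} (hX : IsCompact X) {δ : ℝ}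
    (hδ : 0 < δ) :
    ∃ h, MaxAffine h ∧ (∀ x, h x < g x) ∧ ∀ x ∈ X, g x - h x < δ := by
  have hgc : Continuous g := continuousOn_univ.1 (hg.continuousOn isOpen_univ)
  choose v c hle heq using fun y =>
    hg.exists_inner_add_le_of_lt hgc.lowerSemicontinuous (show g y - δ / 3 < g y by linarith)
  obtain ⟨s, hs⟩ := hX.elim_finite_subcover
    (fun y => {x | g x - 2 * δ / 3 < inner ℝ (v y) x + c y})
    (fun y => isOpen_lt (by fun_prop) (by fun_prop))
    (fun x _ => mem_iUnion.2 ⟨x, show g x - 2 * δ / 3 < _ by linarith [heq x]⟩)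
  classical
  -- `s` is empty when `X` is; the extra index `0` keeps the maximum nonempty.
  refine ⟨_, maxAffine_finset_sup' (insert 0 s) (Finset.insert_nonempty 0 s) v
    (fun y => c y - δ / 3), fun x => ?_, fun x hx => ?_⟩
  · exact (Finset.sup'_lt_iff _).2 fun y _ => by linarith [hle y x]
  · obtain ⟨y, hy, hxy : g x - 2 * δ / 3 < inner ℝ (v y) x + c y⟩ := mem_iUnion₂.1 (hs hx)
    have := Finset.le_sup' (fun y => inner ℝ (v y) x + (c y - δ / 3))
      (Finset.mem_insert_of_mem hy : y ∈ insert 0 s)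
    linarith

theorem convex_strict_underapprox_maxAffine_general {d : ℕ}
    (g : EuclideanSpace ℝ (Fin d) → ℝ) (hg : ConvexOn ℝ Set.univ g)
    (X : Set (EuclideanSpace ℝ (Fin d))) (hX : IsCompact X)
    (ε : ℝ) (hε : 0 < ε) :
    ∃ h : EuclideanSpace ℝ (Fin d) → ℝ, MaxAffine h ∧ (∀ x ∈ X, h x < g x) ∧
      sSup ((fun x => g x - h x) '' X) < ε := by
  obtain ⟨h, hmax, hlt, hclose⟩ := hg.exists_maxAffine_lt_and_sub_lt hX (half_pos hε)
  refine ⟨h, hmax, fun x _ => hlt x, ?_⟩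
  calc sSup ((fun x => g x - h x) '' X) ≤ ε / 2 :=
        Real.sSup_le (by rintro _ ⟨x, hx, rfl⟩; exact (hclose x hx).le) (half_pos hε).le
    _ < ε := half_lt_self hε

/-- **Lemma B.3 of the paper**: any convex function on ℝ^d can be uniformly strictly
underapproximated within `ε` on a compact convex set by a max-affine function. -/
theorem convex_strict_underapprox_maxAffine {d : ℕ}
    (g : EuclideanSpace ℝ (Fin d) → ℝ) (hg : ConvexOn ℝ Set.univ g)
    (X : Set (EuclideanSpace ℝ (Fin d))) (hX : IsCompact X) (hXconv : Convex ℝ X)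
    (ε : ℝ) (hε : 0 < ε) :
    ∃ h : EuclideanSpace ℝ (Fin d) → ℝ, MaxAffine h ∧ (∀ x ∈ X, h x < g x) ∧
      sSup ((fun x => g x - h x) '' X) < ε :=
  convex_strict_underapprox_maxAffine_general g hg X hX ε hε
end

section
/- Let (X₁, X₂) be a convexly separable pair of finite subsets of ℝ^d. Then there exists a max-affine function h : ℝ^d → ℝ such that h(x) > 0 for all x ∈ X₁ and h(x) ≤ 0 for all x ∈ X₂. -/
/-- An ordered pair `(X₁, X₂)` of subsets of ℝ^d is *convexly separable* if there exists a
nonempty closed convex set `X ⊆ ℝ^d` such that `X₂ ⊆ X` and `X₁ ⊆ ℝ^d \ X`. -/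
def ConvexlySeparable {d : ℕ} (X₁ X₂ : Set (EuclideanSpace ℝ (Fin d))) : Prop :=
  ∃ X : Set (EuclideanSpace ℝ (Fin d)),
    X.Nonempty ∧ IsClosed X ∧ Convex ℝ X ∧ X₂ ⊆ X ∧ X₁ ⊆ Xᶜ

/-!
Each point `p ∈ X₁` lies outside the closed convex set `X ⊇ X₂`, so by Hahn–Banach some affine
function is positive at `p` and negative on `X`. The maximum of these finitely many affine
functions, together with the constant `-1` (which keeps the family nonempty when `X₁ = ∅`),
is positive on `X₁` and negative on `X₂`.
-/

open Finset RealInnerProductSpace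

theorem exists_inner_add_neg_on_pos_at_of_notMem {E : Type*} [NormedAddCommGroup E]
    [InnerProductSpace ℝ E] [CompleteSpace E] {X : Set E} (hconv : Convex ℝ X)
    (hclosed : IsClosed X) {p : E} (hp : p ∉ X) :
    ∃ (a : E) (b : ℝ), (∀ y ∈ X, ⟪a, y⟫ + b < 0) ∧ 0 < ⟪a, p⟫ + b := by
  obtain ⟨f, u, hfX, hfp⟩ := geometric_hahn_banach_closed_point hconv hclosed hp
  refine ⟨(InnerProductSpace.toDual ℝ E).symm f, -u, fun y hy => ?_, ?_⟩
  · simpa using hfX y hy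
  · simpa using hfp

theorem maxAffine_sup'_univ {d : ℕ} {ι : Type*} [Fintype ι] [Nonempty ι]
    (a : ι → EuclideanSpace ℝ (Fin d)) (b : ι → ℝ) :
    MaxAffine fun x => univ.sup' univ_nonempty fun i => ⟪a i, x⟫ + b i := by
  obtain ⟨n, ⟨σ⟩⟩ := Finite.exists_equiv_fin ι
  cases n with
  | zero => exact (IsEmpty.false (σ (Classical.arbitrary ι))).elim
  | succ n =>
    exact ⟨n, a ∘ σ.symm, b ∘ σ.symm, fun x =>
      (sup'_congr (by simp) (map_univ_equiv σ.symm).symm fun _ _ => rfl).trans (sup'_map _ _)⟩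

theorem maxAffine_fits_convexly_separable_finite_general {d : ℕ}
    (X₁ X₂ : Set (EuclideanSpace ℝ (Fin d))) (hX₁ : X₁.Finite)
    (hsep : ConvexlySeparable X₁ X₂) :
    ∃ h : EuclideanSpace ℝ (Fin d) → ℝ, MaxAffine h ∧
      (∀ x ∈ X₁, 0 < h x) ∧ (∀ x ∈ X₂, h x ≤ 0) := by
  obtain ⟨X, -, hXclosed, hXconv, hX₂X, hX₁X⟩ := hsep
  have : Fintype X₁ := hX₁.fintype
  choose a b hneg hpos using fun p : X₁ =>
    exists_inner_add_neg_on_pos_at_of_notMem hXconv hXclosed (hX₁X p.2)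
  refine ⟨_, maxAffine_sup'_univ (fun i : Option X₁ => i.elim 0 a) (fun i => i.elim (-1) b),
    fun x hx => ?_, fun y hy => sup'_le _ _ fun i _ => ?_⟩
  · have hle := le_sup' (fun i : Option X₁ => ⟪i.elim 0 a, x⟫ + i.elim (-1) b)
      (mem_univ (some ⟨x, hx⟩))
    exact (hpos ⟨x, hx⟩).trans_le hle
  · cases i with
    | none => simp
    | some p => exact (hneg p y (hX₂X hy)).le

/-- **Theorem 3 of the paper**: a convexly separable pair of finite subsets of ℝ^d can be
perfectly fit by a max-affine classifier (equivalently an input-convex ReLU network). -/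
theorem maxAffine_fits_convexly_separable_finite {d : ℕ}
    (X₁ X₂ : Set (EuclideanSpace ℝ (Fin d))) (hX₁ : X₁.Finite) (hX₂ : X₂.Finite)
    (hsep : ConvexlySeparable X₁ X₂) :
    ∃ h : EuclideanSpace ℝ (Fin d) → ℝ, MaxAffine h ∧
      (∀ x ∈ X₁, 0 < h x) ∧ (∀ x ∈ X₂, h x ≤ 0) :=
  maxAffine_fits_convexly_separable_finite_general X₁ X₂ hX₁ hsep
end

section
/- Fix M, N, d ∈ ℕ with M, N ≥ 1. Let x⁽¹⁾, …, x⁽ᴹ⁾, y⁽¹⁾, …, y⁽ᴺ⁾ be random vectors in ℝ^d whose d·(M+N) coordinates are drawn independently and identically from the uniform distribution on [−1, 1]. Then the probability that the pair ({x⁽¹⁾, …, x⁽ᴹ⁾}, {y⁽¹⁾, …, y⁽ᴺ⁾}) is convexly separable is at least 1 − (1 − M!·N!/(M+N)!)^d. -/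
open MeasureTheory

/-- The uniform probability distribution on the interval `[-1, 1] ⊆ ℝ`. -/
noncomputable def uniformIcc : Measure ℝ :=
  (volume (Set.Icc (-1 : ℝ) 1))⁻¹ • volume.restrict (Set.Icc (-1 : ℝ) 1)

/-!
In a fixed coordinate the `M + N` sample values are i.i.d. and almost surely distinct, so all
`(M + N)!` orderings of them are equally likely, and the `M! N!` orderings that put every
`x`-value below every `y`-value have total probability `M! N! / (M + N)!`. On that event the
half-space `{z | min_j y⁽ʲ⁾_k ≤ z_k}` separates the two samples. The coordinates are independent,
so the probability that no coordinate separates is at most `(1 - M! N! / (M + N)!)^d`.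
-/

open ProbabilityTheory
open scoped ENNReal Nat

instance isProbabilityMeasure_uniformIcc : IsProbabilityMeasure uniformIcc :=
  cond_isProbabilityMeasure_of_finite (by simp) (by simp)

instance nullSingletonClass_uniformIcc : NullSingletonClass uniformIcc :=
  ⟨fun x => by rw [uniformIcc, Measure.smul_apply, measure_singleton, smul_zero]⟩

section Pi

variable {ι X : Type*} [Fintype ι] [MeasurableSpace X] (μ : Measure X) [IsProbabilityMeasure μ]

lemma ae_pi_apply_ne [MeasurableEq X] [NullSingletonClass μ] {i j : ι} (hij : i ≠ j) :
    ∀ᵐ v ∂Measure.pi (fun _ : ι => μ), v i ≠ v j := by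
  have hindep : IndepFun (fun v : ι → X => v i) (fun v => v j) (Measure.pi fun _ => μ) :=
    (iIndepFun_pi (X := fun _ x => x) fun _ => aemeasurable_id).indepFun hij
  have hlaw := (indepFun_iff_map_prod_eq_prod_map_map (measurable_pi_apply i).aemeasurable
    (measurable_pi_apply j).aemeasurable).mp hindep
  rw [(measurePreserving_eval _ i).map_eq, (measurePreserving_eval _ j).map_eq] at hlaw
  rw [ae_iff]
  simp only [ne_eq, not_not]
  change Measure.pi (fun _ => μ) ((fun v : ι → X => (v i, v j)) ⁻¹' Set.diagonal X) = 0
  rw [← Measure.map_apply (by fun_prop) measurableSet_diagonal, hlaw,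
    Measure.prod_apply measurableSet_diagonal]
  simp [Set.preimage, Set.diagonal]

lemma ae_pi_injective [MeasurableEq X] [NullSingletonClass μ] :
    ∀ᵐ v ∂Measure.pi (fun _ : ι => μ), Function.Injective v := by
  simp only [Function.Injective, ae_all_iff]
  intro i j
  by_cases hij : i = j
  · exact ae_of_all _ fun _ _ => hij
  · filter_upwards [ae_pi_apply_ne μ hij] with v hv h using absurd h hv

lemma measurePreserving_curry_pi (κ : Type*) [Fintype κ] :
    MeasurePreserving (MeasurableEquiv.curry κ ι X) (Measure.pi fun _ : κ × ι => μ)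
      (Measure.pi fun _ : κ => Measure.pi fun _ : ι => μ) :=
  ⟨by fun_prop, by simpa only [Measure.infinitePi_eq_pi] using
    Measure.infinitePi_map_curry (fun (_ : κ) (_ : ι) => μ)⟩

lemma measure_pi_forall_slice_mem (κ : Type*) [Fintype κ] (S : Set (ι → X)) :
    Measure.pi (fun _ : ι × κ => μ) {ω | ∀ k, (fun i => ω (i, k)) ∈ S} =
      Measure.pi (fun _ : ι => μ) S ^ Fintype.card κ := by
  let slices := (MeasurableEquiv.piCongrLeft (fun _ => X) (Equiv.prodComm ι κ)).trans
    (MeasurableEquiv.curry κ ι X)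
  have hslices : MeasurePreserving slices (Measure.pi fun _ : ι × κ => μ)
      (Measure.pi fun _ : κ => Measure.pi fun _ : ι => μ) :=
    (measurePreserving_curry_pi μ κ).comp
      (measurePreserving_piCongrLeft (fun _ : κ × ι => μ) (Equiv.prodComm ι κ))
  have hset : {ω : ι × κ → X | ∀ k, (fun i => ω (i, k)) ∈ S} =
      slices ⁻¹' Set.univ.pi fun _ => S := by
    ext ω
    simp only [Set.mem_preimage, Set.mem_univ_pi]
    rfl
  rw [hset, hslices.measure_preimage_equiv, Measure.pi_pi, Finset.prod_const, Finset.card_univ]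

lemma measure_pi_exists_slice_mem (κ : Type*) [Fintype κ] {S : Set (ι → X)}
    (hS : MeasurableSet S) :
    Measure.pi (fun _ : ι × κ => μ) {ω | ∃ k, (fun i => ω (i, k)) ∈ S} =
      1 - (1 - Measure.pi (fun _ : ι => μ) S) ^ Fintype.card κ := by
  have hcompl : {ω : ι × κ → X | ∃ k, (fun i => ω (i, k)) ∈ S} =
      {ω | ∀ k, (fun i => ω (i, k)) ∈ Sᶜ}ᶜ := by
    ext ω
    simp
  have hmeas : MeasurableSet {ω : ι × κ → X | ∀ k, (fun i => ω (i, k)) ∈ Sᶜ} := by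
    simp only [Set.ofPred_forall]
    exact .iInter fun k => (measurable_pi_lambda _ fun i => measurable_pi_apply (i, k)) hS.compl
  rw [hcompl, prob_compl_eq_one_sub hmeas, measure_pi_forall_slice_mem,
    prob_compl_eq_one_sub hS]

end Pi

section Ranking

variable {α : Type*} {n : ℕ}

def increasingAlong (e : Fin n ≃ α) : Set (α → ℝ) :=
  {v | StrictMono (v ∘ e)}

lemma measurableSet_increasingAlong (e : Fin n ≃ α) :
    MeasurableSet (increasingAlong e) := by
  have : increasingAlong e = ⋂ (i : Fin n) (j : Fin n) (_ : i < j), {v | v (e i) < v (e j)} := by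
    ext v
    simp [increasingAlong, StrictMono]
  rw [this]
  exact .iInter fun i => .iInter fun j => .iInter fun _ =>
    measurableSet_lt (measurable_pi_apply _) (measurable_pi_apply _)

lemma disjoint_increasingAlong {e e' : Fin n ≃ α} (h : e ≠ e') :
    Disjoint (increasingAlong e) (increasingAlong e') := by
  refine Set.disjoint_left.mpr fun v hv hv' => h ?_
  have hrange : Set.range (v ∘ e) = Set.range (v ∘ e') := by
    rw [Set.range_comp, Set.range_comp, e.range_eq_univ, e'.range_eq_univ]
  have hcomp : v ∘ e = v ∘ e' := (StrictMono.range_inj hv hv').mp hrange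
  ext i
  have hi : (v ∘ e) (e.symm (e' i)) = (v ∘ e) i := by
    change v (e (e.symm (e' i))) = (v ∘ e) i
    rw [e.apply_symm_apply, hcomp]
    rfl
  simpa using (congrArg e (hv.injective hi)).symm

lemma exists_mem_increasingAlong {v : α → ℝ} (hv : Function.Injective v) (e : Fin n ≃ α) :
    ∃ e' : Fin n ≃ α, v ∈ increasingAlong e' :=
  ⟨(Tuple.sort (v ∘ e)).trans e,
    (Tuple.monotone_sort (v ∘ e)).strictMono_of_injective
      ((hv.comp e.injective).comp (Tuple.sort (v ∘ e)).injective)⟩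

variable [Fintype α] (μ : Measure ℝ) [IsProbabilityMeasure μ]

lemma measure_increasingAlong_eq (e e' : Fin n ≃ α) :
    Measure.pi (fun _ : α => μ) (increasingAlong e) =
      Measure.pi (fun _ : α => μ) (increasingAlong e') := by
  let τ : α ≃ α := e.symm.trans e'
  have hτ := (measurePreserving_piCongrLeft (fun _ : α => μ) τ).symm
  rw [← hτ.measure_preimage_equiv]
  congr 1
  ext v
  change StrictMono (fun i => v (τ (e i))) ↔ StrictMono (v ∘ e')
  simp [τ, Function.comp_def]

lemma measure_increasingAlong [NullSingletonClass μ] (e : Fin n ≃ α) :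
    Measure.pi (fun _ : α => μ) (increasingAlong e) = (n ! : ℝ≥0∞)⁻¹ := by
  classical
  have hae : ∀ᵐ v ∂Measure.pi (fun _ : α => μ), v ∈ ⋃ e' : Fin n ≃ α, increasingAlong e' := by
    filter_upwards [ae_pi_injective μ] with v hv
    exact Set.mem_iUnion.mpr (exists_mem_increasingAlong hv e)
  have hcover : Measure.pi (fun _ : α => μ) (⋃ e' : Fin n ≃ α, increasingAlong e') = 1 :=
    (ae_eq_univ.mpr (mem_ae_iff.mp hae)).measure_eq.trans measure_univ
  rw [measure_iUnion (fun e₁ e₂ h => disjoint_increasingAlong h) measurableSet_increasingAlong,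
    tsum_fintype] at hcover
  simp only [measure_increasingAlong_eq μ _ e, Finset.sum_const, Finset.card_univ,
    Fintype.card_equiv e, Fintype.card_fin, nsmul_eq_mul] at hcover
  exact ENNReal.eq_inv_of_mul_eq_one_left (by rw [mul_comm, hcover])

end Ranking

section Blocks

variable (m n : ℕ)

def inlLtInr : Set (Fin m ⊕ Fin n → ℝ) :=
  {v | ∀ i j, v (Sum.inl i) < v (Sum.inr j)}

lemma measurableSet_inlLtInr : MeasurableSet (inlLtInr m n) := by
  simp only [inlLtInr, Set.ofPred_forall]
  exact .iInter fun i => .iInter fun j =>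
    measurableSet_lt (measurable_pi_apply _) (measurable_pi_apply _)

lemma increasingAlong_sumCongr_subset (σ : Equiv.Perm (Fin m) × Equiv.Perm (Fin n)) :
    increasingAlong (finSumFinEquiv.symm.trans (Equiv.Perm.sumCongrHom _ _ σ)) ⊆
      inlLtInr m n := by
  intro v hv i j
  have hlt : Fin.castAdd n (σ.1.symm i) < Fin.natAdd m (σ.2.symm j) := by
    simp only [Fin.lt_def, Fin.val_castAdd, Fin.val_natAdd]
    omega
  simpa using hv hlt

lemma factorial_mul_factorial_div_le_measure_inlLtInr (μ : Measure ℝ) [IsProbabilityMeasure μ]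
    [NullSingletonClass μ] :
    (m ! * n ! : ℝ≥0∞) / (m + n)! ≤ Measure.pi (fun _ => μ) (inlLtInr m n) := by
  let enum (σ : Equiv.Perm (Fin m) × Equiv.Perm (Fin n)) : Fin (m + n) ≃ Fin m ⊕ Fin n :=
    finSumFinEquiv.symm.trans (Equiv.Perm.sumCongrHom _ _ σ)
  have henum : Function.Injective enum := fun σ τ h => Equiv.Perm.sumCongrHom_injective <| by
    simpa [enum, ← Equiv.trans_assoc] using congrArg (finSumFinEquiv.trans ·) h
  calc (m ! * n ! : ℝ≥0∞) / (m + n)!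
      = ∑ σ, Measure.pi (fun _ => μ) (increasingAlong (enum σ)) := by
        simp [measure_increasingAlong, Fintype.card_perm, div_eq_mul_inv]
    _ = Measure.pi (fun _ => μ) (⋃ σ, increasingAlong (enum σ)) :=
        ((measure_iUnion (fun σ τ h => disjoint_increasingAlong (henum.ne h))
          fun σ => measurableSet_increasingAlong _).trans (tsum_fintype _)).symm
    _ ≤ Measure.pi (fun _ => μ) (inlLtInr m n) :=
        measure_mono (Set.iUnion_subset (increasingAlong_sumCongr_subset m n))

end Blocks

lemma convexlySeparable_of_lt {d : ℕ} {X₁ X₂ : Set (EuclideanSpace ℝ (Fin d))}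
    (hfin : X₂.Finite) (hne : X₂.Nonempty) (f : EuclideanSpace ℝ (Fin d) →L[ℝ] ℝ)
    (h : ∀ x ∈ X₁, ∀ y ∈ X₂, f x < f y) :
    ConvexlySeparable X₁ X₂ := by
  obtain ⟨y₀, hy₀, hmin⟩ := Set.exists_min_image X₂ f hfin hne
  exact ⟨{z | f y₀ ≤ f z}, ⟨y₀, le_refl (f y₀)⟩, isClosed_le continuous_const f.continuous,
    convex_halfSpace_ge f.toLinearMap.isLinear _, hmin, fun x hx => not_le.mpr (h x hx y₀ hy₀)⟩

theorem uniform_data_convexly_separable_prob_bound_general (M N d : ℕ) (hN : 1 ≤ N) :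
    ENNReal.ofReal
        (1 - (1 - (M.factorial * N.factorial : ℝ) / ((M + N).factorial : ℝ)) ^ d) ≤
      Measure.pi (fun _ : (Fin M ⊕ Fin N) × Fin d => uniformIcc)
        {ω | ConvexlySeparable
          (Set.range fun i : Fin M =>
            (WithLp.toLp 2 (fun k : Fin d => ω (Sum.inl i, k)) : EuclideanSpace ℝ (Fin d)))
          (Set.range fun j : Fin N =>
            (WithLp.toLp 2 (fun k : Fin d => ω (Sum.inr j, k)) : EuclideanSpace ℝ (Fin d)))} := by
  set p : ℝ := (M.factorial * N.factorial : ℝ) / ((M + N).factorial : ℝ)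
  have hp_le_one : p ≤ 1 := by
    refine div_le_one_of_le₀ ?_ (by positivity)
    exact_mod_cast Nat.le_of_dvd (M + N).factorial_pos
      (Nat.factorial_mul_factorial_dvd_factorial_add M N)
  have hp : ENNReal.ofReal p ≤ Measure.pi (fun _ => uniformIcc) (inlLtInr M N) := by
    convert factorial_mul_factorial_div_le_measure_inlLtInr M N uniformIcc using 1
    rw [ENNReal.ofReal_div_of_pos (by positivity)]
    simp
  have : Nonempty (Fin N) := Fin.pos_iff_nonempty.mp hN
  calc ENNReal.ofReal (1 - (1 - p) ^ d) = 1 - (1 - ENNReal.ofReal p) ^ d := by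
        rw [ENNReal.ofReal_sub _ (by positivity), ENNReal.ofReal_pow (by linarith),
          ENNReal.ofReal_sub _ (by positivity), ENNReal.ofReal_one]
    _ ≤ 1 - (1 - Measure.pi (fun _ => uniformIcc) (inlLtInr M N)) ^ d := by gcongr
    _ = Measure.pi (fun _ : (Fin M ⊕ Fin N) × Fin d => uniformIcc)
          {ω | ∃ k, (fun a => ω (a, k)) ∈ inlLtInr M N} := by
        rw [measure_pi_exists_slice_mem _ _ (measurableSet_inlLtInr M N), Fintype.card_fin]
    _ ≤ _ := measure_mono fun ω ⟨k, hk⟩ =>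
        convexlySeparable_of_lt (Set.finite_range _) (Set.range_nonempty _)
          (EuclideanSpace.proj k) (by rintro _ ⟨i, rfl⟩ _ ⟨j, rfl⟩; simpa using hk i j)

/-- **Theorem 4 of the paper, first case**: if the `d·(M+N)` coordinates of the samples
`x⁽¹⁾, …, x⁽ᴹ⁾, y⁽¹⁾, …, y⁽ᴺ⁾ ∈ ℝ^d` are i.i.d. uniform on `[-1, 1]`, then the pair
`({x⁽¹⁾, …, x⁽ᴹ⁾}, {y⁽¹⁾, …, y⁽ᴺ⁾})` is convexly separable with probability at least
`1 - (1 - M!·N!/(M+N)!)^d`. -/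
theorem uniform_data_convexly_separable_prob_bound (M N d : ℕ) (hM : 1 ≤ M) (hN : 1 ≤ N) :
    ENNReal.ofReal
        (1 - (1 - (M.factorial * N.factorial : ℝ) / ((M + N).factorial : ℝ)) ^ d) ≤
      Measure.pi (fun _ : (Fin M ⊕ Fin N) × Fin d => uniformIcc)
        {ω | ConvexlySeparable
          (Set.range fun i : Fin M =>
            (WithLp.toLp 2 (fun k : Fin d => ω (Sum.inl i, k)) : EuclideanSpace ℝ (Fin d)))
          (Set.range fun j : Fin N =>
            (WithLp.toLp 2 (fun k : Fin d => ω (Sum.inr j, k)) : EuclideanSpace ℝ (Fin d)))} :=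
  uniform_data_convexly_separable_prob_bound_general M N d hN
end

section
/- Fix M, N, d ∈ ℕ with M, N ≥ 1 and d ≥ M + N. Let x⁽¹⁾, …, x⁽ᴹ⁾, y⁽¹⁾, …, y⁽ᴺ⁾ be random vectors in ℝ^d whose d·(M+N) coordinates are drawn independently and identically from the uniform distribution on [−1, 1]. Then, almost surely, the pair ({x⁽¹⁾, …, x⁽ᴹ⁾}, {y⁽¹⁾, …, y⁽ᴺ⁾}) is convexly separable. -/
open MeasureTheory

open Set Module

/-! The convex hull of the `y⁽ʲ⁾` is a nonempty closed convex set containing them, so separation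
can only fail if some `x⁽ⁱ⁾` lies in it. Once the `y⁽ʲ⁾` are fixed, their hull lies in an affine
subspace of dimension `N - 1 < d`, which is Lebesgue-null; the law of `x⁽ⁱ⁾` is independent of the
`y⁽ʲ⁾` and dominated by Lebesgue measure, so by Fubini each event `x⁽ⁱ⁾ ∈ conv {y⁽ʲ⁾}` is null. -/

section ConvexHull

variable {E : Type*} [NormedAddCommGroup E] [NormedSpace ℝ E]

theorem convexHull_range_eq_image_stdSimplex {ι : Type*} [Fintype ι] (v : ι → E) :
    convexHull ℝ (range v) = Fintype.linearCombination ℝ v '' stdSimplex ℝ ι := by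
  classical
  rw [← convexHull_rangle_single_eq_stdSimplex, LinearMap.image_convexHull, ← range_comp]
  congr with i
  simp [Fintype.linearCombination_apply_single]

/-- The hull is the projection of a closed subset of `stdSimplex ℝ ι × E × (ι → E)` along the
compact factor. -/
theorem isClosed_setOf_mem_convexHull_range {ι : Type*} [Fintype ι] :
    IsClosed {p : E × (ι → E) | p.1 ∈ convexHull ℝ (range p.2)} := by
  have hproj : {p : E × (ι → E) | p.1 ∈ convexHull ℝ (range p.2)} =
      Prod.snd '' {q : stdSimplex ℝ ι × (E × (ι → E)) | ∑ i, q.1.val i • q.2.2 i = q.2.1} := by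
    ext ⟨x, v⟩
    simp [convexHull_range_eq_image_stdSimplex, Fintype.linearCombination_apply]
  rw [hproj]
  exact isClosedMap_snd_of_compactSpace _ (isClosed_eq (continuous_finsetSum _ fun i _ =>
    ((continuous_apply i).comp (continuous_subtype_val.comp continuous_fst)).smul
      ((continuous_apply i).comp (continuous_snd.comp continuous_snd))) (by fun_prop))

theorem MeasureTheory.Measure.addHaar_convexHull_range_eq_zero [MeasurableSpace E]
    [BorelSpace E] [FiniteDimensional ℝ E] (μ : Measure E) [μ.IsAddHaarMeasure] {ι : Type*}
    [Fintype ι] (v : ι → E) (hcard : Fintype.card ι ≤ finrank ℝ E) :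
    μ (convexHull ℝ (range v)) = 0 := by
  cases isEmpty_or_nonempty ι
  · simp [range_eq_empty]
  obtain ⟨n, hn⟩ := Nat.exists_eq_succ_of_ne_zero (Fintype.card_ne_zero (α := ι))
  refine measure_mono_null (convexHull_subset_affineSpan _) (addHaar_affineSubspace μ _ ?_)
  intro htop
  have hspan : vectorSpan ℝ (range v) = ⊤ := by
    rw [← direction_affineSpan, htop, AffineSubspace.direction_top]
  have hrank := finrank_vectorSpan_range_le ℝ v hn
  rw [hspan, finrank_top] at hrank
  omega

theorem ae_forall_notMem_convexHull_range [MeasurableSpace E] [BorelSpace E]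
    [SecondCountableTopology E] {ι κ : Type*} [Fintype ι] [Fintype κ] (μ : Measure E)
    [IsProbabilityMeasure μ] (ν : Measure (κ → E)) [SFinite ν]
    (hμ : ∀ v : κ → E, μ (convexHull ℝ (range v)) = 0) :
    ∀ᵐ p ∂(Measure.pi fun _ : ι => μ).prod ν, ∀ i, p.1 i ∉ convexHull ℝ (range p.2) := by
  refine ae_all_iff.2 fun i => ?_
  have hmeas : MeasurableSet {p : (ι → E) × (κ → E) | p.1 i ∈ convexHull ℝ (range p.2)} :=
    (isClosed_setOf_mem_convexHull_range.preimage
      (by fun_prop : Continuous fun p : (ι → E) × (κ → E) => (p.1 i, p.2))).measurableSet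
  have hsection (v : κ → E) :
      (Measure.pi fun _ : ι => μ) {x | x i ∈ convexHull ℝ (range v)} = 0 := by
    rw [← hμ v]
    exact (measurePreserving_eval _ i).measure_preimage
      ((finite_range v).isClosed_convexHull ℝ).measurableSet.nullMeasurableSet
  rw [ae_iff]
  simp only [not_not]
  rw [Measure.prod_apply_symm hmeas]
  simp [hsection]

end ConvexHull

theorem MeasureTheory.Measure.pi_mono {ι : Type*} [Fintype ι] {α : ι → Type*}
    [∀ i, MeasurableSpace (α i)] {μ ν : ∀ i, Measure (α i)} (h : ∀ i, μ i ≤ ν i) :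
    Measure.pi μ ≤ Measure.pi ν := by
  refine le_iff.2 fun s hs => ?_
  rw [pi_def, pi_def, toMeasure_apply _ _ hs, toMeasure_apply _ _ hs]
  refine OuterMeasure.le_pi.2 (fun t _ => ?_) s
  exact (OuterMeasure.pi_pi_le _ t).trans (Finset.prod_le_prod' fun i _ => h i _)

theorem measurePreserving_curry {ι κ X : Type*} [Fintype ι] [Fintype κ] [MeasurableSpace X]
    (μ : Measure X) [IsProbabilityMeasure μ] :
    MeasurePreserving (MeasurableEquiv.curry ι κ X) (Measure.pi fun _ => μ)
      (Measure.pi fun _ => Measure.pi fun _ => μ) where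
  measurable := (MeasurableEquiv.curry ι κ X).measurable
  map_eq := by
    simp only [← Measure.infinitePi_eq_pi]
    exact Measure.infinitePi_map_curry fun _ _ => μ

-- `uniformIcc` is by definition the conditional measure `volume[|Icc (-1) 1]`.
instance : IsProbabilityMeasure uniformIcc :=
  ProbabilityTheory.cond_isProbabilityMeasure_of_finite (μ := volume) (s := Icc (-1) 1)
    (by simp) (by simp)

theorem uniformIcc_le_volume : uniformIcc ≤ volume := by
  have hinv : (volume (Icc (-1 : ℝ) 1))⁻¹ ≤ 1 := by
    rw [ENNReal.inv_le_one, Real.volume_Icc]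
    norm_num
  refine Measure.le_iff'.2 fun s => ?_
  calc uniformIcc s = (volume (Icc (-1 : ℝ) 1))⁻¹ * volume.restrict (Icc (-1 : ℝ) 1) s := rfl
    _ ≤ 1 * volume s := mul_le_mul' hinv (Measure.restrict_le_self s)
    _ = volume s := one_mul _

theorem convexlySeparable_range_toLp {d : ℕ} {ι κ : Type*} [Finite κ] [Nonempty κ]
    (x : ι → Fin d → ℝ) (y : κ → Fin d → ℝ) (h : ∀ i, x i ∉ convexHull ℝ (range y)) :
    ConvexlySeparable (range fun i => WithLp.toLp 2 (x i))
      (range fun j => WithLp.toLp 2 (y j)) := by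
  have hhull : convexHull ℝ (range fun j => WithLp.toLp 2 (y j)) =
      WithLp.toLp 2 '' convexHull ℝ (range y) := by
    simpa [← range_comp, Function.comp_def] using
      ((WithLp.linearEquiv 2 ℝ (Fin d → ℝ)).symm.toLinearMap.image_convexHull (range y)).symm
  refine ⟨convexHull ℝ (range fun j => WithLp.toLp 2 (y j)),
    (range_nonempty _).mono (subset_convexHull ℝ _), (finite_range _).isClosed_convexHull ℝ,
    convex_convexHull ℝ _, subset_convexHull ℝ _, ?_⟩
  rintro _ ⟨i, rfl⟩ hi
  rw [hhull, (WithLp.toLp_injective 2).mem_set_image] at hi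
  exact h i hi

theorem uniform_data_convexly_separable_high_dim_general (M N d : ℕ)
    (hN : 1 ≤ N) (hd : M + N ≤ d) :
    Measure.pi (fun _ : (Fin M ⊕ Fin N) × Fin d => uniformIcc)
        {ω | ConvexlySeparable
          (Set.range fun i : Fin M =>
            (WithLp.toLp 2 (fun k : Fin d => ω (Sum.inl i, k)) : EuclideanSpace ℝ (Fin d)))
          (Set.range fun j : Fin N =>
            (WithLp.toLp 2 (fun k : Fin d => ω (Sum.inr j, k)) : EuclideanSpace ℝ (Fin d)))} = 1 := by
  let P := Measure.pi fun _ : Fin d => uniformIcc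
  have hsplit : MeasurePreserving
      (fun ω : (Fin M ⊕ Fin N) × Fin d → ℝ =>
        ((fun i k => ω (.inl i, k), fun j k => ω (.inr j, k)) :
          (Fin M → Fin d → ℝ) × (Fin N → Fin d → ℝ)))
      (Measure.pi fun _ => uniformIcc) ((Measure.pi fun _ => P).prod (Measure.pi fun _ => P)) :=
    (measurePreserving_sumPiEquivProdPi _).comp (measurePreserving_curry uniformIcc)
  have hnull (y : Fin N → Fin d → ℝ) : P (convexHull ℝ (range y)) = 0 :=
    Measure.absolutelyContinuous_of_le (Measure.pi_mono fun _ => uniformIcc_le_volume)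
      (Measure.addHaar_convexHull_range_eq_zero volume y (by simp; omega))
  have hgood := hsplit.quasiMeasurePreserving.ae (ae_forall_notMem_convexHull_range P _ hnull)
  have : Nonempty (Fin N) := ⟨⟨0, hN⟩⟩
  exact (measure_congr (ae_eq_univ.2
    (hgood.mono fun ω hω => convexlySeparable_range_toLp _ _ hω))).trans measure_univ

/-- **Theorem 4 of the paper, second case**: if `d ≥ M + N` and the `d·(M+N)` coordinates of
the samples `x⁽¹⁾, …, x⁽ᴹ⁾, y⁽¹⁾, …, y⁽ᴺ⁾ ∈ ℝ^d` are i.i.d. uniform on `[-1, 1]`, then the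
pair `({x⁽¹⁾, …, x⁽ᴹ⁾}, {y⁽¹⁾, …, y⁽ᴺ⁾})` is almost surely convexly separable. -/
theorem uniform_data_convexly_separable_high_dim (M N d : ℕ)
    (hM : 1 ≤ M) (hN : 1 ≤ N) (hd : M + N ≤ d) :
    Measure.pi (fun _ : (Fin M ⊕ Fin N) × Fin d => uniformIcc)
        {ω | ConvexlySeparable
          (Set.range fun i : Fin M =>
            (WithLp.toLp 2 (fun k : Fin d => ω (Sum.inl i, k)) : EuclideanSpace ℝ (Fin d)))
          (Set.range fun j : Fin N =>
            (WithLp.toLp 2 (fun k : Fin d => ω (Sum.inr j, k)) : EuclideanSpace ℝ (Fin d)))} = 1 :=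
  uniform_data_convexly_separable_high_dim_general M N d hN hd
end
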